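/- arXiv:2302.01195 — 6 statements merged into one kernel-verified Lean document; each statement's English description precedes it below -/
import Mathlib

section
/- Let H be a complex Hilbert space, D ⊆ H, M : D → H a map, N : H → H a continuous linear map, and λ > 0. Assume I + λN : H → H is bijective with inverse R. If p ∈ D and w ∈ H satisfy w = p + λ • M p and w = (I − λN)(R (p − λ • M p)), then M p + N p = 0. -/
/-!
For `u = R (p - λ M p)` the resolvent gives `u + λ N u = p - λ M p`, while the fixed-point
equation reads `u - λ N u = p + λ M p`. Adding the two yields `2 u = 2 p`, so `u = p`, and then
the first equation becomes `λ (M p + N p) = 0`.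
-/

theorem eq_of_add_eq_sub_of_sub_eq_add {G : Type*} [AddCommGroup G] [IsAddTorsionFree G]
    {u p a b : G} (h₁ : u + a = p - b) (h₂ : u - a = p + b) : u = p :=
  nsmul_right_injective two_ne_zero <| by
    simpa only [two_nsmul, add_add_sub_cancel, sub_add_add_cancel] using congrArg₂ (· + ·) h₁ h₂

theorem stmt5_general {H : Type*} [NormedAddCommGroup H] [InnerProductSpace ℂ H]
    (M : H → H) (N : H →L[ℂ] H) (l : ℝ) (hl : 0 < l)
    (R : H → H) (hR : ∀ y : H, R y + l • N (R y) = y)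
    (p : H) (w : H)
    (hw : w = p + l • M p)
    (hfix : w = R (p - l • M p) - l • N (R (p - l • M p))) :
    M p + N p = 0 := by
  have := IsAddTorsionFree.of_isTorsionFree ℝ H
  set u := R (p - l • M p)
  have hres : u + l • N u = p - l • M p := hR _
  have hup : u = p := eq_of_add_eq_sub_of_sub_eq_add hres (hfix ▸ hw)
  rw [hup] at hres
  have hsmul : l • (M p + N p) = 0 := by linear_combination (norm := module) hres
  exact (smul_eq_zero.mp hsmul).resolve_left hl.ne'

/-- Conversely, a fixed point of the Peaceman–Rachford map with `w = p + λ M p`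
yields a solution of `M p + N p = 0`. -/
theorem stmt5 {H : Type*} [NormedAddCommGroup H] [InnerProductSpace ℂ H] [CompleteSpace H]
    (D : Set H) (M : H → H) (N : H →L[ℂ] H) (l : ℝ) (hl : 0 < l)
    (hbij : Function.Bijective (fun x : H => x + l • N x))
    (R : H → H) (hR : ∀ y : H, R y + l • N (R y) = y)
    (hRl : ∀ x : H, R (x + l • N x) = x)
    (p : H) (hp : p ∈ D) (w : H)
    (hw : w = p + l • M p)
    (hfix : w = R (p - l • M p) - l • N (R (p - l • M p))) :
    M p + N p = 0 :=
  stmt5_general M N l hl R hR p w hw hfix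
end

section
/- (Abstract form of Theorem 2.1(a).) Let H be a complex Hilbert space, D ⊆ H, M : D → H a monotone map, N : H → H a continuous linear map with Re⟪x, N x⟫ ≥ 0 for all x ∈ H, and λ > 0; assume I + λN is bijective with inverse R. Let p ∈ D satisfy M p + N p = 0 and set w := p + λ • M p. Let (p_k) be a sequence in D, set w_k := p_k + λ • M p_k, and assume the Peaceman–Rachford recursion w_{k+1} = (I − λN)(R (p_k − λ • M p_k)) holds for all k. Then for every k: ‖w_{k+1} − w‖ ≤ ‖w_k − w‖ (the error sequence (‖w_k − w‖) is monotonically decreasing) and ‖p_k − p‖ ≤ ‖w_k − w‖. -/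
lemma aux1 {H : Type*} [NormedAddCommGroup H] [InnerProductSpace ℂ H] (a b : H)
    (h : 0 ≤ (inner ℂ a b : ℂ).re) : ‖a - b‖ ≤ ‖a + b‖ := by
  have h1 := @norm_add_sq ℂ H _ _ _ a b
  have h2 := @norm_sub_sq ℂ H _ _ _ a b
  simp only [RCLike.re_to_complex] at h1 h2
  nlinarith [norm_nonneg (a - b), norm_nonneg (a + b)]

lemma aux2 {H : Type*} [NormedAddCommGroup H] [InnerProductSpace ℂ H] (a b : H)
    (h : 0 ≤ (inner ℂ a b : ℂ).re) : ‖a‖ ≤ ‖a + b‖ := by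
  have h1 := @norm_add_sq ℂ H _ _ _ a b
  simp only [RCLike.re_to_complex] at h1
  nlinarith [norm_nonneg a, norm_nonneg (a + b), sq_nonneg ‖b‖]

lemma aux_smul_re {H : Type*} [NormedAddCommGroup H] [InnerProductSpace ℂ H] (a b : H)
    (l : ℝ) (hl : 0 ≤ l) (h : 0 ≤ (inner ℂ a b : ℂ).re) :
    0 ≤ (inner ℂ a (l • b) : ℂ).re := by
  rw [← Complex.coe_smul, inner_smul_right]
  simpa using mul_nonneg hl h

/-- Theorem 2.1 (a), abstract form: along the Peaceman–Rachford iteration the error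
`‖w_k − w‖` is monotonically decreasing and dominates `‖p_k − p‖`. -/
theorem stmt6 {H : Type*} [NormedAddCommGroup H] [InnerProductSpace ℂ H] [CompleteSpace H]
    (D : Set H) (M : H → H)
    (hmono : ∀ u ∈ D, ∀ v ∈ D, 0 ≤ (inner ℂ (u - v) (M u - M v) : ℂ).re)
    (N : H →L[ℂ] H) (hN : ∀ x : H, 0 ≤ (inner ℂ x (N x) : ℂ).re)
    (l : ℝ) (hl : 0 < l)
    (hbij : Function.Bijective (fun x : H => x + l • N x))
    (R : H → H) (hR : ∀ y : H, R y + l • N (R y) = y)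
    (p : H) (hp : p ∈ D) (hsol : M p + N p = 0)
    (pseq : ℕ → H) (hpD : ∀ k, pseq k ∈ D)
    (wseq : ℕ → H) (hw : ∀ k, wseq k = pseq k + l • M (pseq k))
    (hrec : ∀ k, wseq (k + 1)
      = R (pseq k - l • M (pseq k)) - l • N (R (pseq k - l • M (pseq k)))) :
    ∀ k : ℕ,
      ‖wseq (k + 1) - (p + l • M p)‖ ≤ ‖wseq k - (p + l • M p)‖ ∧
      ‖pseq k - p‖ ≤ ‖wseq k - (p + l • M p)‖ := by
  intro k
  have hMp : M p = -N p := eq_neg_of_add_eq_zero_left hsol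
  have hz : p - l • M p = p + l • N p := by rw [hMp, smul_neg, sub_neg_eq_add]
  have hRp : R (p - l • M p) = p := by
    apply hbij.injective
    show R (p - l • M p) + l • N (R (p - l • M p)) = p + l • N p
    rw [hR (p - l • M p), hz]
  set q := R (pseq k - l • M (pseq k)) with hqdef
  have hq : q + l • N q = pseq k - l • M (pseq k) := hR _
  -- re positivity
  have hre1 : 0 ≤ (inner ℂ (pseq k - p) (l • (M (pseq k) - M p)) : ℂ).re :=
    aux_smul_re _ _ l hl.le (hmono _ (hpD k) _ hp)
  have hre2 : 0 ≤ (inner ℂ (q - p) (l • N (q - p)) : ℂ).re :=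
    aux_smul_re _ _ l hl.le (hN _)
  -- decompositions
  have e1 : wseq k - (p + l • M p) = (pseq k - p) + l • (M (pseq k) - M p) := by
    rw [hw k]; module
  have e2 : (pseq k - l • M (pseq k)) - (p - l • M p)
      = (pseq k - p) - l • (M (pseq k) - M p) := by module
  have e3 : wseq (k + 1) - (p + l • M p) = (q - p) - l • N (q - p) := by
    rw [hrec k, hMp, map_sub, ← hqdef]; module
  have e4 : (q - p) + l • N (q - p) = (pseq k - p) - l • (M (pseq k) - M p) := by
    rw [← e2, map_sub]
    have hp' : p + l • N p = p - l • M p := hz.symm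
    calc (q - p) + l • (N q - N p)
        = (q + l • N q) - (p + l • N p) := by module
      _ = (pseq k - l • M (pseq k)) - (p - l • M p) := by rw [hq, hz]
  constructor
  · calc ‖wseq (k + 1) - (p + l • M p)‖
        = ‖(q - p) - l • N (q - p)‖ := by rw [e3]
      _ ≤ ‖(q - p) + l • N (q - p)‖ := aux1 _ _ hre2
      _ = ‖(pseq k - p) - l • (M (pseq k) - M p)‖ := by rw [e4]
      _ ≤ ‖(pseq k - p) + l • (M (pseq k) - M p)‖ := aux1 _ _ hre1
      _ = ‖wseq k - (p + l • M p)‖ := by rw [e1]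
  · rw [e1]; exact aux2 _ _ hre1
end

section
/- (Quantitative error decrease in the Peaceman–Rachford iteration.) Let H be a complex Hilbert space, D ⊆ H, M : D → H a monotone map, N : H → H a continuous linear map with Re⟪x, N x⟫ ≥ 0 for all x ∈ H, and λ > 0; assume I + λN is bijective with inverse R. Let p ∈ D satisfy M p + N p = 0 and set w := p + λ • M p. Let (p_k) be a sequence in D, set w_k := p_k + λ • M p_k, and assume w_{k+1} = (I − λN)(R (p_k − λ • M p_k)) for all k. Then for every k: ‖w_{k+1} − w‖² ≤ ‖w_k − w‖² − 4λ · Re⟪p_k − p, M p_k − M p⟫. -/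
lemma key_sq {H : Type*} [NormedAddCommGroup H] [InnerProductSpace ℂ H]
    (a b : H) : ‖a - b‖ ^ 2 = ‖a + b‖ ^ 2 - 4 * (inner ℂ a b : ℂ).re := by
  have h1 := @norm_add_sq ℂ H _ _ _ a b
  have h2 := @norm_sub_sq ℂ H _ _ _ a b
  simp only [RCLike.re_to_complex] at h1 h2
  nlinarith [h1, h2]

lemma key_smul {H : Type*} [NormedAddCommGroup H] [InnerProductSpace ℂ H]
    (a b : H) (l : ℝ) : (inner ℂ a (l • b) : ℂ).re = l * (inner ℂ a b : ℂ).re := by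
  rw [show (l : ℝ) • b = (l : ℂ) • b from (RCLike.real_smul_eq_coe_smul (K := ℂ) l b),
    inner_smul_right]
  simp

/-- Quantitative error decrease in the Peaceman–Rachford iteration. -/
theorem stmt7 {H : Type*} [NormedAddCommGroup H] [InnerProductSpace ℂ H] [CompleteSpace H]
    (D : Set H) (M : H → H)
    (hmono : ∀ u ∈ D, ∀ v ∈ D, 0 ≤ (inner ℂ (u - v) (M u - M v) : ℂ).re)
    (N : H →L[ℂ] H) (hN : ∀ x : H, 0 ≤ (inner ℂ x (N x) : ℂ).re)
    (l : ℝ) (hl : 0 < l)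
    (hbij : Function.Bijective (fun x : H => x + l • N x))
    (R : H → H) (hR : ∀ y : H, R y + l • N (R y) = y)
    (p : H) (hp : p ∈ D) (hsol : M p + N p = 0)
    (pseq : ℕ → H) (hpD : ∀ k, pseq k ∈ D)
    (wseq : ℕ → H) (hw : ∀ k, wseq k = pseq k + l • M (pseq k))
    (hrec : ∀ k, wseq (k + 1)
      = R (pseq k - l • M (pseq k)) - l • N (R (pseq k - l • M (pseq k)))) :
    ∀ k : ℕ,
      ‖wseq (k + 1) - (p + l • M p)‖ ^ 2
        ≤ ‖wseq k - (p + l • M p)‖ ^ 2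
          - 4 * l * (inner ℂ (pseq k - p) (M (pseq k) - M p) : ℂ).re := by
  intro k
  have hNp : (N p : H) = -(M p) := by
    have := hsol
    linear_combination (norm := module) this
  set u := R (pseq k - l • M (pseq k)) with hu_def
  have hu : u + l • N u = pseq k - l • M (pseq k) := hR _
  set v := u - p with hv_def
  have hNv : N v = N u - N p := by simp [hv_def]
  -- identity 1
  have h1 : wseq (k + 1) - (p + l • M p) = v - l • N v := by
    rw [hrec k, ← hu_def, hv_def, hNv, hNp]
    module
  -- identity 2
  have h2 : v + l • N v = (pseq k - p) - l • (M (pseq k) - M p) := by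
    rw [hv_def, hNv, hNp]
    have : u + l • N u = pseq k - l • M (pseq k) := hu
    linear_combination (norm := module) this
  have h3 : wseq k - (p + l • M p) = (pseq k - p) + l • (M (pseq k) - M p) := by
    rw [hw k]; module
  set a := pseq k - p
  set b := M (pseq k) - M p
  have e1 : ‖v - l • N v‖ ^ 2 = ‖v + l • N v‖ ^ 2 - 4 * (l * (inner ℂ v (N v) : ℂ).re) := by
    rw [key_sq, key_smul]
  have e2 : ‖a - l • b‖ ^ 2 = ‖a + l • b‖ ^ 2 - 4 * (l * (inner ℂ a b : ℂ).re) := by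
    rw [key_sq, key_smul]
  have hNv0 : 0 ≤ (inner ℂ v (N v) : ℂ).re := hN v
  rw [h1, h3]
  calc ‖v - l • N v‖ ^ 2 ≤ ‖v + l • N v‖ ^ 2 := by
        rw [e1]; nlinarith
    _ = ‖a - l • b‖ ^ 2 := by rw [h2]
    _ = ‖a + l • b‖ ^ 2 - 4 * l * (inner ℂ a b : ℂ).re := by rw [e2]; ring
end

section
/- (Summability of monotonicity gaps along the Peaceman–Rachford iteration.) Let H be a complex Hilbert space, D ⊆ H, M : D → H a monotone map, N : H → H a continuous linear map with Re⟪x, N x⟫ ≥ 0 for all x ∈ H, and λ > 0; assume I + λN is bijective with inverse R. Let p ∈ D satisfy M p + N p = 0 and set w := p + λ • M p. Let (p_k) be a sequence in D, set w_k := p_k + λ • M p_k, and assume w_{k+1} = (I − λN)(R (p_k − λ • M p_k)) for all k. Then for every n, the partial sum ∑_{k=0}^{n} Re⟪p_k − p, M p_k − M p⟫ ≤ ‖w_0 − w‖² / (4λ); consequently Re⟪p_k − p, M p_k − M p⟫ → 0 as k → ∞. -/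
lemma pr_aux {H : Type*} [NormedAddCommGroup H] [InnerProductSpace ℂ H]
    (x y : H) : ‖x - y‖ ^ 2 = ‖x + y‖ ^ 2 - 4 * (inner ℂ x y : ℂ).re := by
  have h1 := norm_add_sq (𝕜 := ℂ) x y
  have h2 := norm_sub_sq (𝕜 := ℂ) x y
  simp only [RCLike.re_to_complex] at h1 h2
  linarith

lemma pr_aux' {H : Type*} [NormedAddCommGroup H] [InnerProductSpace ℂ H]
    (x y : H) (l : ℝ) :
    ‖x - l • y‖ ^ 2 = ‖x + l • y‖ ^ 2 - 4 * l * (inner ℂ x y : ℂ).re := by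
  rw [pr_aux, RCLike.real_smul_eq_coe_smul (K := ℂ), inner_smul_right]
  simp [Complex.mul_re]
  ring

/-- Summability of the monotonicity gaps along the Peaceman–Rachford iteration. -/
theorem stmt8 {H : Type*} [NormedAddCommGroup H] [InnerProductSpace ℂ H] [CompleteSpace H]
    (D : Set H) (M : H → H)
    (hmono : ∀ u ∈ D, ∀ v ∈ D, 0 ≤ (inner ℂ (u - v) (M u - M v) : ℂ).re)
    (N : H →L[ℂ] H) (hN : ∀ x : H, 0 ≤ (inner ℂ x (N x) : ℂ).re)
    (l : ℝ) (hl : 0 < l)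
    (hbij : Function.Bijective (fun x : H => x + l • N x))
    (R : H → H) (hR : ∀ y : H, R y + l • N (R y) = y)
    (p : H) (hp : p ∈ D) (hsol : M p + N p = 0)
    (pseq : ℕ → H) (hpD : ∀ k, pseq k ∈ D)
    (wseq : ℕ → H) (hw : ∀ k, wseq k = pseq k + l • M (pseq k))
    (hrec : ∀ k, wseq (k + 1)
      = R (pseq k - l • M (pseq k)) - l • N (R (pseq k - l • M (pseq k)))) :
    (∀ n : ℕ,
      ∑ k ∈ Finset.range (n + 1), (inner ℂ (pseq k - p) (M (pseq k) - M p) : ℂ).re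
        ≤ ‖wseq 0 - (p + l • M p)‖ ^ 2 / (4 * l)) ∧
    Filter.Tendsto (fun k => (inner ℂ (pseq k - p) (M (pseq k) - M p) : ℂ).re)
      Filter.atTop (nhds 0) := by
  set w : H := p + l • M p with hwdef
  set g : ℕ → ℝ := fun k => (inner ℂ (pseq k - p) (M (pseq k) - M p) : ℂ).re with hg
  have hgnn : ∀ k, 0 ≤ g k := fun k => hmono _ (hpD k) _ hp
  have hMp : M p = - N p := eq_neg_of_add_eq_zero_left hsol
  have key : ∀ k, ‖wseq (k + 1) - w‖ ^ 2 + 4 * l * g k ≤ ‖wseq k - w‖ ^ 2 := by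
    intro k
    set q := R (pseq k - l • M (pseq k)) with hq
    have hqe : q + l • N q = pseq k - l • M (pseq k) := hR _
    have hpe : p + l • N p = p - l • M p := by
      rw [hMp]; simp [smul_neg, sub_neg_eq_add]
    have hdiff : (q - p) + l • N (q - p)
        = (pseq k - p) - l • (M (pseq k) - M p) := by
      rw [map_sub, smul_sub]
      rw [show (q - p) + (l • N q - l • N p) = (q + l • N q) - (p + l • N p) by abel,
        hqe, hpe]
      module
    have hw1 : wseq (k + 1) - w = (q - p) - l • N (q - p) := by
      rw [hrec k, ← hq, map_sub, smul_sub, hwdef, hMp]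
      simp only [smul_neg]
      module
    have hwk : wseq k - w = (pseq k - p) + l • (M (pseq k) - M p) := by
      rw [hw k, hwdef, smul_sub]; abel
    have e1 : ‖wseq (k + 1) - w‖ ^ 2
        = ‖(q - p) + l • N (q - p)‖ ^ 2 - 4 * l * (inner ℂ (q - p) (N (q - p)) : ℂ).re := by
      rw [hw1, pr_aux']
    have e2 : ‖(q - p) + l • N (q - p)‖ ^ 2 = ‖wseq k - w‖ ^ 2 - 4 * l * g k := by
      rw [hdiff, pr_aux' (pseq k - p) (M (pseq k) - M p) l, ← hwk]
    have h3 : 0 ≤ 4 * l * (inner ℂ (q - p) (N (q - p)) : ℂ).re := by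
      have := hN (q - p)
      positivity
    rw [e1, e2]; linarith
  have hsum : ∀ n, ∑ k ∈ Finset.range (n + 1), (4 * l * g k) + ‖wseq (n + 1) - w‖ ^ 2
      ≤ ‖wseq 0 - w‖ ^ 2 := by
    intro n
    induction n with
    | zero => rw [show (0:ℕ)+1 = 1 from rfl, Finset.sum_range_one]; linarith [key 0]
    | succ m ih =>
      have := key (m + 1)
      rw [Finset.sum_range_succ]
      linarith
  have hbound : ∀ n, ∑ k ∈ Finset.range (n + 1), g k ≤ ‖wseq 0 - w‖ ^ 2 / (4 * l) := by
    intro n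
    have h := hsum n
    have hn : 0 ≤ ‖wseq (n + 1) - w‖ ^ 2 := by positivity
    rw [← Finset.mul_sum] at h
    rw [le_div_iff₀ (by positivity)]
    linarith [h]
  refine ⟨hbound, ?_⟩
  have hsummable : Summable g := by
    apply summable_of_sum_range_le (c := ‖wseq 0 - w‖ ^ 2 / (4 * l)) hgnn
    intro n
    cases n with
    | zero => simp; positivity
    | succ m => exact hbound m
  exact hsummable.tendsto_atTop_zero
end

section
/- (Abstract form of Theorem 2.1(b): strong convergence of the state component.) Let H and Y be complex Hilbert spaces, D ⊆ H, M : D → H a monotone map, N : H → H a continuous linear map with Re⟪x, N x⟫ ≥ 0 for all x ∈ H, and λ > 0; assume I + λN is bijective with inverse R. Let P : H → Y be a continuous linear map and ω > 0 be such that Re⟪u − v, M u − M v⟫ ≥ ω · ‖P u − P v‖² for all u, v ∈ D. Let p ∈ D satisfy M p + N p = 0, set w := p + λ • M p, let (p_k) be a sequence in D with w_k := p_k + λ • M p_k and w_{k+1} = (I − λN)(R (p_k − λ • M p_k)) for all k. Then ‖P p_k − P p‖² ≤ (1/(4λω)) · (‖w_k − w‖² − ‖w_{k+1} − w‖²) for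 every k, and ‖P p_k − P p‖ → 0 as k → ∞. -/
lemma keylem9 {H : Type*} [NormedAddCommGroup H] [InnerProductSpace ℂ H]
    (a b : H) (l : ℝ) :
    ‖a + l • b‖ ^ 2 = ‖a - l • b‖ ^ 2 + 4 * l * (inner ℂ a b : ℂ).re := by
  have h1 : (l : ℝ) • b = ((l : ℂ)) • b := RCLike.real_smul_eq_coe_smul (K := ℂ) l b
  rw [h1, @norm_add_sq ℂ, @norm_sub_sq ℂ, inner_smul_right]
  simp [Complex.mul_re]
  ring

/-- Theorem 2.1 (b), abstract form: strong convergence of the state component. -/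
theorem stmt9 {H Y : Type*} [NormedAddCommGroup H] [InnerProductSpace ℂ H] [CompleteSpace H]
    [NormedAddCommGroup Y] [InnerProductSpace ℂ Y] [CompleteSpace Y]
    (D : Set H) (M : H → H)
    (hmono : ∀ u ∈ D, ∀ v ∈ D, 0 ≤ (inner ℂ (u - v) (M u - M v) : ℂ).re)
    (N : H →L[ℂ] H) (hN : ∀ x : H, 0 ≤ (inner ℂ x (N x) : ℂ).re)
    (l : ℝ) (hl : 0 < l)
    (hbij : Function.Bijective (fun x : H => x + l • N x))
    (R : H → H) (hR : ∀ y : H, R y + l • N (R y) = y)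
    (P : H →L[ℂ] Y) (ω : ℝ) (hω : 0 < ω)
    (hcoer : ∀ u ∈ D, ∀ v ∈ D,
      ω * ‖P u - P v‖ ^ 2 ≤ (inner ℂ (u - v) (M u - M v) : ℂ).re)
    (p : H) (hp : p ∈ D) (hsol : M p + N p = 0)
    (pseq : ℕ → H) (hpD : ∀ k, pseq k ∈ D)
    (wseq : ℕ → H) (hw : ∀ k, wseq k = pseq k + l • M (pseq k))
    (hrec : ∀ k, wseq (k + 1)
      = R (pseq k - l • M (pseq k)) - l • N (R (pseq k - l • M (pseq k)))) :
    (∀ k : ℕ,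
      ‖P (pseq k) - P p‖ ^ 2
        ≤ (1 / (4 * l * ω))
          * (‖wseq k - (p + l • M p)‖ ^ 2 - ‖wseq (k + 1) - (p + l • M p)‖ ^ 2)) ∧
    Filter.Tendsto (fun k => ‖P (pseq k) - P p‖) Filter.atTop (nhds 0) := by
  set w : H := p + l • M p with hwdef
  have hMp : M p = -N p := by
    have := hsol; linear_combination (norm := abel) hsol
  -- R fixes p - l • M p, i.e. R (p + l • N p) = p
  have hRp : R (p - l • M p) = p := by
    apply hbij.injective
    show R (p - l • M p) + l • N (R (p - l • M p)) = p + l • N p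
    rw [hR]
    rw [hMp]; simp
  have hwT : w = R (p - l • M p) - l • N (R (p - l • M p)) := by
    rw [hRp, hwdef, hMp]; module
  -- key per-step estimate
  have hkey : ∀ k : ℕ, 4 * l * ω * ‖P (pseq k) - P p‖ ^ 2
      ≤ ‖wseq k - w‖ ^ 2 - ‖wseq (k + 1) - w‖ ^ 2 := by
    intro k
    set u := pseq k with hu
    set a := u - p with ha
    set b := M u - M p with hb
    have hA : ‖wseq k - w‖ ^ 2 = ‖a + l • b‖ ^ 2 := by
      rw [hw k, hwdef]
      congr 1
      rw [ha, hb]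
      rw [smul_sub, hu]; abel
    have hB : ‖(u - l • M u) - (p - l • M p)‖ ^ 2 = ‖a - l • b‖ ^ 2 := by
      congr 1
      rw [ha, hb, smul_sub]; abel
    have hAB : ‖a + l • b‖ ^ 2 = ‖a - l • b‖ ^ 2 + 4 * l * (inner ℂ a b : ℂ).re :=
      keylem9 a b l
    -- nonexpansive step: C ≤ B
    have hC : ‖wseq (k + 1) - w‖ ^ 2 ≤ ‖(u - l • M u) - (p - l • M p)‖ ^ 2 := by
      rw [hrec k, hwT]
      set r := R (u - l • M u) with hr
      set r' := R (p - l • M p) with hr'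
      set c := r - r' with hc
      set d := N r - N r' with hd
      have hdN : d = N c := by rw [hd, hc, map_sub]
      have h1 : (r - l • N r) - (r' - l • N r') = c - l • d := by
        rw [hc, hd, smul_sub]; abel
      have h2 : (u - l • M u) - (p - l • M p) = c + l • d := by
        have e1 : r + l • N r = u - l • M u := hR _
        have e2 : r' + l • N r' = p - l • M p := hR _
        rw [← e1, ← e2, hc, hd, smul_sub]; abel
      rw [h1, h2, keylem9 c d l]
      have : 0 ≤ 4 * l * (inner ℂ c d : ℂ).re := by
        rw [hdN]
        have := hN c
        positivity
      linarith
    have hcoer' : ω * ‖P u - P p‖ ^ 2 ≤ (inner ℂ a b : ℂ).re :=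
      hcoer u (hpD k) p hp
    have hPle : 4 * l * ω * ‖P u - P p‖ ^ 2 ≤ 4 * l * (inner ℂ a b : ℂ).re := by
      nlinarith [hl.le]
    calc 4 * l * ω * ‖P u - P p‖ ^ 2 ≤ 4 * l * (inner ℂ a b : ℂ).re := hPle
      _ = ‖a + l • b‖ ^ 2 - ‖a - l • b‖ ^ 2 := by rw [hAB]; ring
      _ ≤ ‖wseq k - w‖ ^ 2 - ‖wseq (k + 1) - w‖ ^ 2 := by
          rw [hA]
          rw [hB] at hC
          linarith
  have hc4 : (0:ℝ) < 4 * l * ω := by positivity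
  have hmain : ∀ k : ℕ, ‖P (pseq k) - P p‖ ^ 2
      ≤ (1 / (4 * l * ω)) * (‖wseq k - w‖ ^ 2 - ‖wseq (k + 1) - w‖ ^ 2) := by
    intro k
    have h := hkey k
    rw [one_div, inv_mul_eq_div, le_div_iff₀ hc4, mul_comm]
    exact h
  refine ⟨hmain, ?_⟩
  -- convergence
  set g : ℕ → ℝ := fun k => ‖wseq k - w‖ ^ 2 with hg
  have hanti : Antitone g := by
    apply antitone_nat_of_succ_le
    intro k
    have h := hkey k
    have h2 : 0 ≤ 4 * l * ω * ‖P (pseq k) - P p‖ ^ 2 := by positivity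
    simp only [hg]
    linarith
  have hbdd : BddBelow (Set.range g) := ⟨0, by rintro x ⟨k, rfl⟩; positivity⟩
  have hgL : Filter.Tendsto g Filter.atTop (nhds (⨅ k, g k)) :=
    tendsto_atTop_ciInf hanti hbdd
  have hgL' : Filter.Tendsto (fun k => g (k + 1)) Filter.atTop (nhds (⨅ k, g k)) :=
    hgL.comp (Filter.tendsto_add_atTop_nat 1)
  have hdiff : Filter.Tendsto (fun k => (1 / (4 * l * ω)) * (g k - g (k + 1)))
      Filter.atTop (nhds 0) := by
    have := (hgL.sub hgL').const_mul (1 / (4 * l * ω))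
    simpa using this
  have hsq : Filter.Tendsto (fun k => ‖P (pseq k) - P p‖ ^ 2) Filter.atTop (nhds 0) := by
    apply squeeze_zero (fun k => by positivity) (fun k => hmain k) hdiff
  have := hsq.sqrt
  rw [Real.sqrt_zero] at this
  convert this using 2 with k
  rw [Real.sqrt_sq (norm_nonneg _)]
end

section
/- (Abstract form of Theorem 2.1(c): uniform convergence.) Let H be a complex Hilbert space, X a complex Hilbert space, D ⊆ H, M : D → H a monotone map, N : H → H a continuous linear map with Re⟪x, N x⟫ ≥ 0 for all x ∈ H, and λ > 0; assume I + λN is bijective with inverse R. Let T be an index set, c > 0, and (φ_t)_{t ∈ T} a family of maps φ_t : D → X such that Re⟪u − v, M u − M v⟫ ≥ c · ‖φ_t u − φ_t v‖² for all u, v ∈ D and all t ∈ T. Let p ∈ D satisfy M p + N p = 0, set w := p + λ • M p, let (p_k) be a sequence in D with w_k := p_k + λ • M p_k and w_{k+1} = (I − λN)(R (p_k − λ • M p_k)) for all k. Then for every k and every t ∈ T: ‖φ_t p_k − φ_t p‖² ≤ (1/(4λc)) · (‖w_k − w‖² − ‖w_{k+1} − w‖²); consequently sup_{t ∈ T} ‖φ_t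 p_k − φ_t p‖ → 0 as k → ∞. -/
lemma aux_smul_coe {H : Type*} [NormedAddCommGroup H] [InnerProductSpace ℂ H]
    (l : ℝ) (y : H) : l • y = (l : ℂ) • y := by
  rw [← algebraMap_smul ℂ l y]; norm_num

lemma aux_inner_smul_re {H : Type*} [NormedAddCommGroup H] [InnerProductSpace ℂ H]
    (l : ℝ) (x y : H) : (inner ℂ x (l • y) : ℂ).re = l * (inner ℂ x y : ℂ).re := by
  rw [aux_smul_coe, inner_smul_right]
  simp [Complex.mul_re]

lemma aux_pol {H : Type*} [NormedAddCommGroup H] [InnerProductSpace ℂ H] (x y : H) :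
    ‖x + y‖ ^ 2 - ‖x - y‖ ^ 2 = 4 * (inner ℂ x y : ℂ).re := by
  have h1 := norm_add_sq (𝕜 := ℂ) x y
  have h2 := norm_sub_sq (𝕜 := ℂ) x y
  simp only [RCLike.re_to_complex] at h1 h2
  rw [h1, h2]; ring

/-- Theorem 2.1 (c), abstract form: uniform convergence of the point evaluations. -/
theorem stmt10 {H X : Type*} [NormedAddCommGroup H] [InnerProductSpace ℂ H] [CompleteSpace H]
    [NormedAddCommGroup X] [InnerProductSpace ℂ X] [CompleteSpace X]
    (D : Set H) (M : H → H)
    (hmono : ∀ u ∈ D, ∀ v ∈ D, 0 ≤ (inner ℂ (u - v) (M u - M v) : ℂ).re)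
    (N : H →L[ℂ] H) (hN : ∀ x : H, 0 ≤ (inner ℂ x (N x) : ℂ).re)
    (l : ℝ) (hl : 0 < l)
    (hbij : Function.Bijective (fun x : H => x + l • N x))
    (R : H → H) (hR : ∀ y : H, R y + l • N (R y) = y)
    {ι : Type*} (φ : ι → H → X) (c : ℝ) (hc : 0 < c)
    (hcoer : ∀ u ∈ D, ∀ v ∈ D, ∀ t : ι,
      c * ‖φ t u - φ t v‖ ^ 2 ≤ (inner ℂ (u - v) (M u - M v) : ℂ).re)
    (p : H) (hp : p ∈ D) (hsol : M p + N p = 0)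
    (pseq : ℕ → H) (hpD : ∀ k, pseq k ∈ D)
    (wseq : ℕ → H) (hw : ∀ k, wseq k = pseq k + l • M (pseq k))
    (hrec : ∀ k, wseq (k + 1)
      = R (pseq k - l • M (pseq k)) - l • N (R (pseq k - l • M (pseq k)))) :
    (∀ k : ℕ, ∀ t : ι,
      ‖φ t (pseq k) - φ t p‖ ^ 2
        ≤ (1 / (4 * l * c))
          * (‖wseq k - (p + l • M p)‖ ^ 2 - ‖wseq (k + 1) - (p + l • M p)‖ ^ 2)) ∧
    (∀ ε : ℝ, 0 < ε → ∃ K : ℕ, ∀ k ≥ K, ∀ t : ι,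
      ‖φ t (pseq k) - φ t p‖ < ε) := by
  have hMp : M p = -(N p) := eq_neg_of_add_eq_zero_left hsol
  set w : H := p + l • M p with hwdef
  -- the key inequality
  have key : ∀ k, ‖wseq (k + 1) - w‖ ^ 2
      ≤ ‖wseq k - w‖ ^ 2 - 4 * l * (inner ℂ (pseq k - p) (M (pseq k) - M p) : ℂ).re := by
    intro k
    set u : H := R (pseq k - l • M (pseq k)) with hudef
    have hu : u + l • N u = pseq k - l • M (pseq k) := hR _
    set q : H := u - p with hqdef
    -- wseq (k+1) - w = q - l • N q
    have hA : wseq (k + 1) - w = q - l • N q := by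
      rw [hrec k, ← hudef, hwdef, hqdef, hMp]
      simp only [map_sub, smul_sub, smul_neg]
      abel
    -- wseq k - w = x + y with x = pseq k - p, y = l • (M (pseq k) - M p)
    have hB : wseq k - w = (pseq k - p) + l • (M (pseq k) - M p) := by
      rw [hw k, hwdef, smul_sub]; abel
    -- q + l • N q = x - y
    have hC : q + l • N q = (pseq k - p) - l • (M (pseq k) - M p) := by
      have h1 : q + l • N q = (u + l • N u) - (p + l • N p) := by
        rw [hqdef]; simp only [map_sub, smul_sub]; abel
      rw [h1, hu, hMp]
      simp only [smul_sub, smul_neg]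
      abel
    have e1 : ‖wseq k - w‖ ^ 2 - ‖(pseq k - p) - l • (M (pseq k) - M p)‖ ^ 2
        = 4 * l * (inner ℂ (pseq k - p) (M (pseq k) - M p) : ℂ).re := by
      rw [hB, aux_pol, aux_inner_smul_re]; ring
    have e2 : ‖(pseq k - p) - l • (M (pseq k) - M p)‖ ^ 2 - ‖wseq (k + 1) - w‖ ^ 2
        = 4 * l * (inner ℂ q (N q) : ℂ).re := by
      rw [hA, ← hC, aux_pol, aux_inner_smul_re]; ring
    have hq := hN q
    nlinarith [hq]
  have hkey2 : ∀ k, ∀ t : ι, 4 * l * (c * ‖φ t (pseq k) - φ t p‖ ^ 2)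
      ≤ ‖wseq k - w‖ ^ 2 - ‖wseq (k + 1) - w‖ ^ 2 := by
    intro k t
    have h1 := hcoer (pseq k) (hpD k) p hp t
    have h2 := key k
    nlinarith
  have part1 : ∀ k : ℕ, ∀ t : ι, ‖φ t (pseq k) - φ t p‖ ^ 2
      ≤ (1 / (4 * l * c)) * (‖wseq k - w‖ ^ 2 - ‖wseq (k + 1) - w‖ ^ 2) := by
    intro k t
    have h := hkey2 k t
    have hpos : 0 < 4 * l * c := by positivity
    rw [one_div, inv_mul_eq_div, le_div_iff₀ hpos]
    nlinarith
  refine ⟨part1, ?_⟩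
  -- part (b)
  set d : ℕ → ℝ := fun k => ‖wseq k - w‖ ^ 2 with hd
  have hanti : Antitone d := by
    apply antitone_nat_of_succ_le
    intro k
    have h2 := key k
    have h3 := hmono (pseq k) (hpD k) p hp
    simp only [hd]
    nlinarith
  have hbddB : BddBelow (Set.range d) := by
    refine ⟨0, ?_⟩
    rintro x ⟨k, rfl⟩
    positivity
  have hL : Filter.Tendsto d Filter.atTop (nhds (⨅ i, d i)) :=
    tendsto_atTop_ciInf hanti hbddB
  have hL' : Filter.Tendsto (fun k => d (k + 1)) Filter.atTop (nhds (⨅ i, d i)) :=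
    hL.comp (Filter.tendsto_add_atTop_nat 1)
  have hdiff : Filter.Tendsto (fun k => d k - d (k + 1)) Filter.atTop (nhds 0) := by
    simpa using hL.sub hL'
  intro ε hε
  have hεc : (0 : ℝ) < 4 * l * c * ε ^ 2 := by positivity
  obtain ⟨K, hK⟩ := (Metric.tendsto_atTop.mp hdiff) (4 * l * c * ε ^ 2) hεc
  refine ⟨K, fun k hk t => ?_⟩
  have h1 := part1 k t
  have h2 := hK k hk
  rw [Real.dist_eq, sub_zero] at h2
  have h3 : d k - d (k + 1) < 4 * l * c * ε ^ 2 := lt_of_le_of_lt (le_abs_self _) h2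
  have hpos : (0 : ℝ) < 4 * l * c := by positivity
  have h4 : ‖φ t (pseq k) - φ t p‖ ^ 2 < ε ^ 2 := by
    have : (1 / (4 * l * c)) * (d k - d (k + 1))
        < (1 / (4 * l * c)) * (4 * l * c * ε ^ 2) := by
      apply mul_lt_mul_of_pos_left h3 (by positivity)
    calc ‖φ t (pseq k) - φ t p‖ ^ 2 ≤ (1 / (4 * l * c)) * (d k - d (k + 1)) := h1
      _ < (1 / (4 * l * c)) * (4 * l * c * ε ^ 2) := this
      _ = ε ^ 2 := by field_simp
  exact lt_of_pow_lt_pow_left₀ 2 (le_of_lt hε) h4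
end
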